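/- A poset P of length at most 2 has a least (under inclusion) nonempty D-closed subset if and only if either P has exactly one element or P is isomorphic to P_{I,J} for some nonempty disjoint sets I and J. -/

import Mathlib

/-! Common definitions: lattices of order-convex subsets of a poset,
length of a poset, the identities (S), (U), (B), (L2), (H_n), (H_{m,n}),
join-irreducibility, the join-dependency relation, join-seeds,
the posets P_{I,J}, tree-like posets, D-closed sets,
and complete lattice congruences. -/

open Set

/-- The lattice `Co P` of all order-convex subsets of a poset `P`. -/
def Co (P : Type*) [PartialOrder P] : Type _ := {s : Set P // s.OrdConnected}

namespace Co

variable {P : Type*} [PartialOrder P]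

instance : PartialOrder (Co P) := Subtype.partialOrder _

instance : InfSet (Co P) :=
  ⟨fun S => ⟨⋂ s ∈ S, s.1, Set.ordConnected_biInter fun s _ => s.2⟩⟩

noncomputable instance : CompleteLattice (Co P) :=
  completeLatticeOfInf (Co P) (by
    intro S
    constructor
    · intro t ht
      exact Set.biInter_subset_of_mem (t := fun s => s.1) ht
    · intro b hb
      exact Set.subset_iInter₂ fun t ht => hb ht)

/-- The order-convex subset of `P` with underlying set `X`. -/
def mk' (X : Set P) (hX : X.OrdConnected) : Co P := ⟨X, hX⟩

/-- The singleton `{p}`, as an order-convex set. -/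
def sngl (p : P) : Co P := ⟨{p}, Set.ordConnected_singleton⟩

/-- The empty order-convex set. -/
def emp : Co P := ⟨∅, Set.ordConnected_empty⟩

end Co

/-- `lengthLE P n` states that the poset `P` has length at most `n`, that is,
every finite chain of `P` has at most `n + 1` elements. -/
def lengthLE (P : Type*) [PartialOrder P] (n : ℕ) : Prop :=
  ∀ C : Finset P, IsChain (· ≤ ·) (C : Set P) → C.card ≤ n + 1

section Identities

/-- The Stirlitz identity (S). -/
def IdS (L : Type*) [Lattice L] : Prop :=
  ∀ a b b₀ b₁ c : L,
    a ⊓ ((b ⊓ (b₀ ⊔ b₁)) ⊔ c) =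
      (a ⊓ (b ⊓ (b₀ ⊔ b₁)))
      ⊔ (a ⊓ (b₀ ⊔ c) ⊓ ((b ⊓ (b₀ ⊔ b₁) ⊓ (a ⊔ b₀)) ⊔ c))
      ⊔ (a ⊓ (b₁ ⊔ c) ⊓ ((b ⊓ (b₀ ⊔ b₁) ⊓ (a ⊔ b₁)) ⊔ c))

/-- The Udav identity (U). -/
def IdU (L : Type*) [Lattice L] : Prop :=
  ∀ x x₀ x₁ x₂ : L,
    x ⊓ (x₀ ⊔ x₁) ⊓ (x₁ ⊔ x₂) ⊓ (x₀ ⊔ x₂) =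
      (x ⊓ x₀ ⊓ (x₁ ⊔ x₂)) ⊔ (x ⊓ x₁ ⊓ (x₀ ⊔ x₂)) ⊔ (x ⊓ x₂ ⊓ (x₀ ⊔ x₁))

/-- The Bond identity (B). -/
def IdB (L : Type*) [Lattice L] : Prop :=
  ∀ x a₀ a₁ b₀ b₁ : L,
    x ⊓ (a₀ ⊔ a₁) ⊓ (b₀ ⊔ b₁) =
      (x ⊓ a₀ ⊓ (b₀ ⊔ b₁)) ⊔ (x ⊓ a₁ ⊓ (b₀ ⊔ b₁))
      ⊔ (x ⊓ b₀ ⊓ (a₀ ⊔ a₁)) ⊔ (x ⊓ b₁ ⊓ (a₀ ⊔ a₁))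
      ⊔ (x ⊓ (a₀ ⊔ a₁) ⊓ (b₀ ⊔ b₁) ⊓ (a₀ ⊔ b₀) ⊓ (a₁ ⊔ b₁))
      ⊔ (x ⊓ (a₀ ⊔ a₁) ⊓ (b₀ ⊔ b₁) ⊓ (a₀ ⊔ b₁) ⊓ (a₁ ⊔ b₀))

/-- The identity (L₂). -/
def IdL2 (L : Type*) [Lattice L] : Prop :=
  ∀ a b b' c c' : L,
    a ⊓ ((b ⊓ (c ⊔ c')) ⊔ b') =
      (a ⊓ b ⊓ (c ⊔ c')) ⊔ (a ⊓ ((b ⊓ c) ⊔ b')) ⊔ (a ⊓ ((b ⊓ c') ⊔ b'))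

variable {L : Type*} [Lattice L]

/-- The lattice polynomial `U_{i,n}` (in the variables `x₀, …, xₙ, x'₁, …, x'ₙ`). -/
def Upoly (x x' : ℕ → L) (n : ℕ) (i : ℕ) : L :=
  if h : n ≤ i then x n
  else x i ⊓ (Upoly x x' n (i + 1) ⊔ x' (i + 1))
  termination_by n - i
  decreasing_by omega

/-- The lattice polynomial `V_{i,j,n}`. -/
def Vpoly (x x' : ℕ → L) (n i : ℕ) (j : ℕ) : L :=
  if h : i ≤ j then (x i ⊓ Upoly x x' n (i + 1)) ⊔ (x i ⊓ x' (i + 1))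
  else x j ⊓ (Vpoly x x' n i (j + 1) ⊔ x' (j + 1))
  termination_by i - j
  decreasing_by omega

/-- The lattice polynomial `W_{i,j,n}`. -/
def Wpoly (x x' : ℕ → L) (n i : ℕ) (j : ℕ) : L :=
  if h : i ≤ j then
    x i ⊓ (x' (i + 1) ⊔ x' (i + 2)) ⊓ ((Upoly x x' n (i + 1) ⊓ (x i ⊔ x' (i + 2))) ⊔ x' (i + 1))
  else x j ⊓ (Wpoly x x' n i (j + 1) ⊔ x' (j + 1))
  termination_by i - j
  decreasing_by omega

/-- `bigJoin f k = f 0 ⊔ f 1 ⊔ ⋯ ⊔ f k`. -/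
def bigJoin (f : ℕ → L) : ℕ → L
  | 0 => f 0
  | k + 1 => bigJoin f k ⊔ f (k + 1)

end Identities

/-- The identity (Hₙ) : `Uₙ = ⋁_{0 ≤ i ≤ n-1} V_{i,n} ∨ ⋁_{0 ≤ i ≤ n-2} W_{i,n}`
(intended for `n ≥ 1`). -/
def IdH (n : ℕ) (L : Type*) [Lattice L] : Prop :=
  ∀ x x' : ℕ → L,
    Upoly x x' n 0 =
      bigJoin (fun i =>
        if i + 2 ≤ n then Vpoly x x' n i 0 ⊔ Wpoly x x' n i 0 else Vpoly x x' n i 0) (n - 1)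

/-- The identity (H_{m,n}) (intended for `m, n ≥ 1`); the common base point is
`x 0 = y 0 = t`. -/
def IdHmn (m n : ℕ) (L : Type*) [Lattice L] : Prop :=
  ∀ x x' y y' : ℕ → L, x 0 = y 0 →
    Upoly x x' m 0 ⊓ Upoly y y' n 0 =
      bigJoin (fun i =>
          if i + 2 ≤ m then
            (Vpoly x x' m i 0 ⊓ Upoly y y' n 0) ⊔ (Wpoly x x' m i 0 ⊓ Upoly y y' n 0)
          else Vpoly x x' m i 0 ⊓ Upoly y y' n 0) (m - 1)
      ⊔ bigJoin (fun j =>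
          if j + 2 ≤ n then
            (Upoly x x' m 0 ⊓ Vpoly y y' n j 0) ⊔ (Upoly x x' m 0 ⊓ Wpoly y y' n j 0)
          else Upoly x x' m 0 ⊓ Vpoly y y' n j 0) (n - 1)
      ⊔ (Upoly x x' m 0 ⊓ Upoly y y' n 0 ⊓ (x 1 ⊔ y' 1) ⊓ (x' 1 ⊔ y 1))

/-- `p` is join-irreducible: `p = x ⊔ y` implies `p = x` or `p = y`. -/
def JIrr {L : Type*} [Lattice L] (p : L) : Prop :=
  ∀ x y : L, p = x ⊔ y → p = x ∨ p = y

/-- The join-dependency relation `p D q`. -/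
def DRel {L : Type*} [Lattice L] (p q : L) : Prop :=
  p ≠ q ∧ ∃ x : L, p ≤ q ⊔ x ∧ ∀ y < q, ¬ p ≤ y ⊔ x

/-- A subset `S` of a lattice `L` is a join-seed. -/
def JoinSeed (L : Type*) [Lattice L] (S : Set L) : Prop :=
  (∀ p ∈ S, JIrr p) ∧
  (∀ a : L, ∃ T ⊆ S, IsLUB T a) ∧
  (∀ p ∈ S, ∀ a b : L, p ≤ a ⊔ b → ¬ p ≤ a → ¬ p ≤ b →
    ∃ x ∈ S, ∃ y ∈ S, x ≤ a ∧ y ≤ b ∧ p ≤ x ⊔ y ∧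
      (∀ x' < x, ¬ p ≤ x' ⊔ y) ∧ (∀ y' < y, ¬ p ≤ x ⊔ y'))

/-- The poset `P_{I,J} = I ∪ {p} ∪ J`, where every element of `I` is below `p`,
`p` is below every element of `J`, every element of `I` is below every element
of `J`, and there are no other strict comparabilities. -/
def PIJ (I J : Type*) : Type _ := I ⊕ (Unit ⊕ J)

namespace PIJ

variable {I J : Type*}

/-- The rank (height) of an element of `P_{I,J}`. -/
def rank (a : PIJ I J) : ℕ :=
  Sum.elim (fun _ => 0) (Sum.elim (fun _ => 1) fun _ => 2) a

instance : PartialOrder (PIJ I J) where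
  le a b := a = b ∨ rank a < rank b
  le_refl a := Or.inl rfl
  le_trans a b c hab hbc := by
    rcases hab with rfl | h
    · exact hbc
    · rcases hbc with rfl | h'
      · exact Or.inr h
      · exact Or.inr (h.trans h')
  le_antisymm a b hab hba := by
    rcases hab with rfl | h
    · rfl
    · rcases hba with rfl | h'
      · rfl
      · omega

end PIJ

/-- A poset is tree-like if it has no infinite bounded chain and between any two
points there is at most one repetition-free finite path with respect to the
covering relation. -/
def TreeLike (P : Type*) [PartialOrder P] : Prop :=
  (∀ C : Set P, IsChain (· ≤ ·) C → BddAbove C → BddBelow C → C.Finite) ∧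
  (∀ a b : P, ∀ l₁ l₂ : List P,
    l₁.Nodup → l₁.head? = some a → l₁.getLast? = some b →
      l₁.Chain' (fun u v => u ⋖ v ∨ v ⋖ u) →
    l₂.Nodup → l₂.head? = some a → l₂.getLast? = some b →
      l₂.Chain' (fun u v => u ⋖ v ∨ v ⋖ u) →
    l₁ = l₂)

/-- A subset `U` of a poset `P` is `D`-closed. -/
def DClosed {P : Type*} [PartialOrder P] (U : Set P) : Prop :=
  ∀ x p y : P, x < p → p < y → (x ∈ U ∨ y ∈ U) → p ∈ U

/-- A complete congruence of a complete lattice. -/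
structure IsCompleteCongr {L : Type*} [CompleteLattice L] (θ : L → L → Prop) : Prop where
  refl : ∀ x, θ x x
  symm : ∀ {x y}, θ x y → θ y x
  trans : ∀ {x y z}, θ x y → θ y z → θ x z
  sup : ∀ {a b c d}, θ a b → θ c d → θ (a ⊔ c) (b ⊔ d)
  inf : ∀ {a b c d}, θ a b → θ c d → θ (a ⊓ c) (b ⊓ d)
  cSup : ∀ (x : L) (Y : Set L), Y.Nonempty → (∀ y ∈ Y, θ x y) → θ x (sSup Y)
  cInf : ∀ (x : L) (Y : Set L), Y.Nonempty → (∀ y ∈ Y, θ x y) → θ x (sInf Y)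

/-- The map `h_U : Co(P) → Co(P ∖ U)`, `X ↦ X ∖ U`. -/
def coRestrict {P : Type*} [PartialOrder P] (U : Set P) (X : Co P) :
    Co {p : P // p ∉ U} :=
  ⟨Subtype.val ⁻¹' X.1, by
    constructor
    rintro a ha b hb z hz
    exact X.2.out ha hb ⟨hz.1, hz.2⟩⟩

/-- The lattice `D(P)` of all `D`-closed subsets of a poset `P`. -/
def DSub (P : Type*) [PartialOrder P] : Type _ := {U : Set P // DClosed U}

namespace DSub

variable {P : Type*} [PartialOrder P]

instance : PartialOrder (DSub P) := Subtype.partialOrder _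

instance : InfSet (DSub P) :=
  ⟨fun S => ⟨⋂ U ∈ S, U.1, by
    intro x p y h1 h2 h3
    simp only [Set.mem_iInter] at h3 ⊢
    intro U hU
    exact U.2 x p y h1 h2 (h3.imp (fun h => h U hU) fun h => h U hU)⟩⟩

noncomputable instance : CompleteLattice (DSub P) :=
  completeLatticeOfInf (DSub P) (by
    intro S
    constructor
    · intro t ht
      exact Set.biInter_subset_of_mem (t := fun U => U.1) ht
    · intro b hb
      exact Set.subset_iInter₂ fun t ht => hb ht)

end DSub

/-!
A singleton `{c}` is `D`-closed as soon as `c` is not an endpoint of a three-element chain, and a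
least nonempty `D`-closed set lies inside every `D`-closed singleton, so at most one singleton is
`D`-closed. Without three-element chains every singleton is `D`-closed, so `P` is a point.
Otherwise, length at most 2 makes the middle point `p` of such a chain a `D`-closed singleton; every
other element is the endpoint of a chain whose middle point must then be `p`, so it lies below or
above `p`, and length at most 2 also makes both sides antichains: this is `P_{I,J}`. Conversely,
in `P_{I,J}` each element other than `p` lies on a three-element chain through `p`, so every
nonempty `D`-closed set contains `p`.
-/

namespace PIJ

variable {I J : Type*}

def mid : PIJ I J := Sum.inr (Sum.inl ())

theorem le_iff {a b : PIJ I J} : a ≤ b ↔ a = b ∨ rank a < rank b := Iff.rfl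

theorem lt_iff {a b : PIJ I J} : a < b ↔ rank a < rank b := by
  rw [lt_iff_le_and_ne, le_iff]
  constructor
  · rintro ⟨rfl | h, hne⟩
    exacts [absurd rfl hne, h]
  · exact fun h => ⟨Or.inr h, by rintro rfl; exact lt_irrefl _ h⟩

theorem lt_mid_or_eq_or_mid_lt (a : PIJ I J) : a < mid ∨ a = mid ∨ mid < a := by
  rcases a with i | ⟨⟨⟩⟩ | j
  · exact Or.inl (lt_iff.2 zero_lt_one)
  · exact Or.inr (Or.inl rfl)
  · exact Or.inr (Or.inr (lt_iff.2 one_lt_two))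

end PIJ

variable {P : Type*} [PartialOrder P]

theorem lengthLE.not_lt_lt_lt (hP : lengthLE P 2) {a b c d : P} (hab : a < b) (hbc : b < c)
    (hcd : c < d) : False := by
  classical
  have hmono : StrictMono ![a, b, c, d] := Fin.strictMono_iff_lt_succ.2 fun i => by
    fin_cases i
    exacts [hab, hbc, hcd]
  have := hP (Finset.univ.image ![a, b, c, d]) (by simpa using hmono.monotone.isChain_range)
  rw [Finset.card_image_of_injective _ hmono.injective, Finset.card_univ, Fintype.card_fin] at this
  omega

theorem lengthLE.isAntichain_Iio (hP : lengthLE P 2) {p y : P} (hpy : p < y) :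
    IsAntichain (· ≤ ·) (Iio p) :=
  fun _ _ _ hb hne hab => hP.not_lt_lt_lt (lt_of_le_of_ne hab hne) hb hpy

theorem lengthLE.isAntichain_Ioi (hP : lengthLE P 2) {x p : P} (hxp : x < p) :
    IsAntichain (· ≤ ·) (Ioi p) :=
  fun _ ha _ _ hne hab => hP.not_lt_lt_lt hxp ha (lt_of_le_of_ne hab hne)

def PIJ.val (p : P) : PIJ (Iio p) (Ioi p) → P :=
  Sum.elim Subtype.val (Sum.elim (fun _ => p) Subtype.val)

theorem PIJ.val_le_val_iff {p : P} (hI : IsAntichain (· ≤ ·) (Iio p))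
    (hJ : IsAntichain (· ≤ ·) (Ioi p)) (a b : PIJ (Iio p) (Ioi p)) :
    PIJ.val p a ≤ PIJ.val p b ↔ a ≤ b := by
  rw [PIJ.le_iff]
  rcases a with ⟨i, hi : i < p⟩ | ⟨⟨⟩⟩ | ⟨j, hj : p < j⟩ <;>
    rcases b with ⟨i', hi' : i' < p⟩ | ⟨⟨⟩⟩ | ⟨j', hj' : p < j'⟩ <;>
    simp only [PIJ, PIJ.val, PIJ.rank, Sum.elim_inl, Sum.elim_inr, Sum.inl.injEq, Sum.inr.injEq,
      reduceCtorEq, Subtype.ext_iff, lt_irrefl, or_false, false_or]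
  · exact ⟨hI.eq hi hi', fun h => h ▸ le_rfl⟩
  · exact iff_of_true hi.le zero_lt_one
  · exact iff_of_true (hi.trans hj').le zero_lt_two
  · exact iff_of_false hi'.not_ge (by decide)
  · exact iff_of_true le_rfl trivial
  · exact iff_of_true hj'.le one_lt_two
  · exact iff_of_false (fun h => lt_irrefl p (hj.trans_le h |>.trans hi')) (by decide)
  · exact iff_of_false hj.not_ge (by decide)
  · exact ⟨hJ.eq hj hj', fun h => h ▸ le_rfl⟩

noncomputable def orderIsoPIJ (p : P) (hcomp : ∀ c, c < p ∨ c = p ∨ p < c)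
    (hI : IsAntichain (· ≤ ·) (Iio p)) (hJ : IsAntichain (· ≤ ·) (Ioi p)) :
    P ≃o PIJ (Iio p) (Ioi p) :=
  (RelIso.ofSurjective (OrderEmbedding.ofMapLEIff (PIJ.val p) (PIJ.val_le_val_iff hI hJ))
    fun c => by
      rcases hcomp c with h | rfl | h
      exacts [⟨Sum.inl ⟨c, h⟩, rfl⟩, ⟨PIJ.mid, rfl⟩, ⟨Sum.inr (Sum.inr ⟨c, h⟩), rfl⟩]).symm

theorem exists_isLeast_dClosed_iff :
    (∃ U : Set P, IsLeast {V | DClosed V ∧ V.Nonempty} U) ↔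
      ∃ U : Set P, DClosed U ∧ U.Nonempty ∧ ∀ V : Set P, DClosed V → V.Nonempty → U ⊆ V := by
  simp only [IsLeast, lowerBounds, mem_ofPred_eq, and_imp, and_assoc]

theorem dClosed_singleton {c : P} (hup : ¬∃ q r, c < q ∧ q < r) (hdown : ¬∃ r q, r < q ∧ q < c) :
    DClosed ({c} : Set P) := by
  rintro x q y hxq hqy (rfl | rfl)
  exacts [(hup ⟨q, y, hxq, hqy⟩).elim, (hdown ⟨x, q, hxq, hqy⟩).elim]

theorem dClosed_singleton_of_lt_of_lt (hP : lengthLE P 2) {x p y : P} (hxp : x < p)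
    (hpy : p < y) : DClosed ({p} : Set P) :=
  dClosed_singleton (fun ⟨_, _, hpq, hqr⟩ => hP.not_lt_lt_lt hxp hpq hqr)
    fun ⟨_, _, hrq, hqp⟩ => hP.not_lt_lt_lt hrq hqp hpy

theorem eq_of_isLeast_of_dClosed_singleton {U : Set P}
    (hU : IsLeast {V | DClosed V ∧ V.Nonempty} U) {c d : P} (hc : DClosed ({c} : Set P))
    (hd : DClosed ({d} : Set P)) : c = d := by
  obtain ⟨u, hu⟩ := hU.1.2
  exact (hU.2 ⟨hc, singleton_nonempty c⟩ hu).symm.trans (hU.2 ⟨hd, singleton_nonempty d⟩ hu)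

theorem lt_or_eq_or_gt_of_isLeast (hP : lengthLE P 2) {U : Set P}
    (hU : IsLeast {V | DClosed V ∧ V.Nonempty} U) {p : P} (hp : DClosed ({p} : Set P)) (c : P) :
    c < p ∨ c = p ∨ p < c := by
  have mid_eq {x q y : P} (hxq : x < q) (hqy : q < y) : q = p :=
    eq_of_isLeast_of_dClosed_singleton hU (dClosed_singleton_of_lt_of_lt hP hxq hqy) hp
  by_cases hup : ∃ q r, c < q ∧ q < r
  · obtain ⟨q, r, hcq, hqr⟩ := hup
    exact Or.inl (mid_eq hcq hqr ▸ hcq)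
  by_cases hdown : ∃ r q, r < q ∧ q < c
  · obtain ⟨r, q, hrq, hqc⟩ := hdown
    exact Or.inr (Or.inr (mid_eq hrq hqc ▸ hqc))
  exact Or.inr (Or.inl (eq_of_isLeast_of_dClosed_singleton hU (dClosed_singleton hup hdown) hp))

theorem isLeast_singleton_of_forall_eq {a : P} (h : ∀ b, b = a) :
    IsLeast {V : Set P | DClosed V ∧ V.Nonempty} {a} := by
  refine ⟨⟨?_, singleton_nonempty a⟩, ?_⟩
  · rintro x q y hxq - -
    exact (hxq.ne ((h x).trans (h q).symm)).elim
  · rintro V ⟨-, v, hv⟩ b (rfl : b = a)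
    exact h v ▸ hv

theorem isLeast_singleton_of_lt_of_lt (hP : lengthLE P 2) {x p y : P} (hxp : x < p)
    (hpy : p < y) (hcomp : ∀ c, c < p ∨ c = p ∨ p < c) :
    IsLeast {V : Set P | DClosed V ∧ V.Nonempty} {p} := by
  refine ⟨⟨dClosed_singleton_of_lt_of_lt hP hxp hpy, singleton_nonempty p⟩, ?_⟩
  rintro V ⟨hV, v, hv⟩
  rw [singleton_subset_iff]
  rcases hcomp v with h | rfl | h
  exacts [hV v p y h hpy (Or.inl hv), hv, hV x p v hxp h (Or.inr hv)]

theorem stmt17.{u} (P : Type u) [PartialOrder P] (hP : lengthLE P 2) :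
    (∃ U : Set P, DClosed U ∧ U.Nonempty ∧
      ∀ V : Set P, DClosed V → V.Nonempty → U ⊆ V) ↔
    ((∃ a : P, ∀ b : P, b = a) ∨
      ∃ (I J : Type u), Nonempty I ∧ Nonempty J ∧ Nonempty (P ≃o PIJ I J)) := by
  rw [← exists_isLeast_dClosed_iff]
  constructor
  · rintro ⟨U, hU⟩
    by_cases h3 : ∃ x p y : P, x < p ∧ p < y
    · obtain ⟨x, p, y, hxp, hpy⟩ := h3
      have hcomp := lt_or_eq_or_gt_of_isLeast hP hU (dClosed_singleton_of_lt_of_lt hP hxp hpy)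
      exact Or.inr ⟨Iio p, Ioi p, ⟨⟨x, hxp⟩⟩, ⟨⟨y, hpy⟩⟩,
        ⟨orderIsoPIJ p hcomp (hP.isAntichain_Iio hpy) (hP.isAntichain_Ioi hxp)⟩⟩
    · have hsing (c : P) : DClosed ({c} : Set P) :=
        dClosed_singleton (fun h => h3 ⟨c, h⟩) fun ⟨r, q, h⟩ => h3 ⟨r, q, c, h⟩
      obtain ⟨u, -⟩ := hU.1.2
      exact Or.inl ⟨u, fun b => eq_of_isLeast_of_dClosed_singleton hU (hsing b) (hsing u)⟩
  · rintro (⟨a, ha⟩ | ⟨I, J, ⟨i⟩, ⟨j⟩, ⟨e⟩⟩)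
    · exact ⟨{a}, isLeast_singleton_of_forall_eq ha⟩
    · refine ⟨_, isLeast_singleton_of_lt_of_lt hP (x := e.symm (Sum.inl i)) (p := e.symm PIJ.mid)
        (y := e.symm (Sum.inr (Sum.inr j))) (e.symm.lt_iff_lt.2 (PIJ.lt_iff.2 zero_lt_one))
        (e.symm.lt_iff_lt.2 (PIJ.lt_iff.2 one_lt_two)) fun c => ?_⟩
      rw [e.lt_symm_apply, e.eq_symm_apply, e.symm_apply_lt]
      exact PIJ.lt_mid_or_eq_or_mid_lt (e c)
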